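/- Let k be a field, let R and R^∨ be k-vector spaces with a nondegenerate bilinear pairing ⟨·,·⟩ : R^∨ × R → k, and let V, W be k-vector spaces. Then the map D : Hom(V, R ⊗ W) → Hom_rat(R^∨ ⊗ V, W), sending a linear map f : V → R ⊗ W to the linear map D(f) = (⟨·,·⟩ ⊗ id_W) ∘ (id_{R^∨} ⊗ f) : R^∨ ⊗ V → W, is well defined and bijective. -/

import Mathlib

open TensorProduct

/-!
Write `Φ : R ⊗ W → Hom(R^∨, W)` for the contraction, so that `D f (ξ ⊗ v) = Φ (f v) ξ`.
Since `R^∨` separates the points of `R`, `Φ` is injective (look at coordinates in a basis of `W`),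
hence so is `D`. If `g(· ⊗ v)` kills `⊥E` with `E` finite-dimensional, it factors through the
restriction `R^∨ → E^*`, say as `h'`, and so equals `Φ (∑ eᵢ ⊗ h'(eᵢ^*))` for a basis `(eᵢ)` of
`E`; composing
`v ↦ g(· ⊗ v)` with a linear left inverse of `Φ` then gives a preimage of a rational `g`.
-/

section

variable (k : Type*) [Field k] (R Rv V W : Type*)
  [AddCommGroup R] [Module k R] [AddCommGroup Rv] [Module k Rv]
  [AddCommGroup V] [Module k V] [AddCommGroup W] [Module k W]

/-- The contraction map `R^∨ →ₗ ((R ⊗ W) →ₗ W)`, `ξ ↦ (x ⊗ w ↦ ⟨ξ, x⟩ • w)`,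
associated to a bilinear pairing `⟨·,·⟩ = B : R^∨ → R → k`. -/
noncomputable def pairingContract (B : Rv →ₗ[k] R →ₗ[k] k) :
    Rv →ₗ[k] (R ⊗[k] W) →ₗ[k] W :=
  (TensorProduct.lift.equiv (RingHom.id k) R W W).toLinearMap ∘ₗ
    (LinearMap.llcomp k R k (W →ₗ[k] W) (LinearMap.lsmul k W)) ∘ₗ B

/-- The map `D : Hom(V, R ⊗ W) → Hom(R^∨ ⊗ V, W)`,
`f ↦ (⟨·,·⟩ ⊗ id_W) ∘ (id_{R^∨} ⊗ f)`; on pure tensors,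
`D f (ξ ⊗ v) = (⟨ξ,·⟩ ⊗ id_W) (f v)`. -/
noncomputable def Dmap (B : Rv →ₗ[k] R →ₗ[k] k) (f : V →ₗ[k] R ⊗[k] W) :
    Rv ⊗[k] V →ₗ[k] W :=
  TensorProduct.lift
    (((LinearMap.llcomp k V (R ⊗[k] W) W).flip f) ∘ₗ pairingContract k R Rv W B)

/-- `g : R^∨ ⊗ V → W` is rational if every `v ∈ V` admits a finite-dimensional
subspace `E ⊆ R` with `g(ξ ⊗ v) = 0` for all `ξ ∈ ⊥E`. -/
def IsRatLeft (B : Rv →ₗ[k] R →ₗ[k] k) (g : Rv ⊗[k] V →ₗ[k] W) : Prop :=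
  ∀ v : V, ∃ E : Submodule k R, FiniteDimensional k E ∧
    ∀ ξ : Rv, (∀ x ∈ E, B ξ x = 0) → g (ξ ⊗ₜ[k] v) = 0

theorem LinearMap.exists_comp_eq_of_ker_le {K U U' U'' : Type*} [Field K]
    [AddCommGroup U] [Module K U] [AddCommGroup U'] [Module K U']
    [AddCommGroup U''] [Module K U''] (f : U →ₗ[K] U') (g : U →ₗ[K] U'')
    (hfg : LinearMap.ker f ≤ LinearMap.ker g) : ∃ h : U' →ₗ[K] U'', h ∘ₗ f = g := by
  obtain ⟨σ, hσ⟩ := ((LinearMap.ker f).liftQ f le_rfl).exists_leftInverse_of_injective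
    (Submodule.ker_liftQ_eq_bot' _ f rfl)
  refine ⟨(LinearMap.ker f).liftQ g hfg ∘ₗ σ, LinearMap.ext fun u => ?_⟩
  have hσu : σ (f u) = Submodule.Quotient.mk u := LinearMap.congr_fun hσ (Submodule.Quotient.mk u)
  simp [hσu]

variable {k R Rv V W}

@[simp]
lemma pairingContract_tmul (B : Rv →ₗ[k] R →ₗ[k] k) (ξ : Rv) (x : R) (w : W) :
    pairingContract k R Rv W B ξ (x ⊗ₜ[k] w) = B ξ x • w := by
  simp [pairingContract]

@[simp]
lemma Dmap_tmul (B : Rv →ₗ[k] R →ₗ[k] k) (f : V →ₗ[k] R ⊗[k] W) (ξ : Rv) (v : V) :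
    Dmap k R Rv V W B f (ξ ⊗ₜ[k] v) = pairingContract k R Rv W B ξ (f v) := by
  simp [Dmap]

lemma isRatLeft_Dmap (B : Rv →ₗ[k] R →ₗ[k] k) (f : V →ₗ[k] R ⊗[k] W) :
    IsRatLeft k R Rv V W B (Dmap k R Rv V W B f) := by
  intro v
  obtain ⟨s, hs⟩ := TensorProduct.exists_finset (f v)
  refine ⟨Submodule.span k (Prod.fst '' (s : Set (R × W))),
    FiniteDimensional.span_of_finite k (s.finite_toSet.image _), fun ξ hξ => ?_⟩
  rw [Dmap_tmul, hs, map_sum]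
  refine Finset.sum_eq_zero fun p hp => ?_
  rw [pairingContract_tmul, hξ p.1 (Submodule.subset_span ⟨p, hp, rfl⟩), zero_smul]

lemma pairingContract_flip_injective {B : Rv →ₗ[k] R →ₗ[k] k}
    (hB : ∀ x : R, (∀ ξ : Rv, B ξ x = 0) → x = 0) :
    Function.Injective (pairingContract k R Rv W B).flip := by
  classical
  let b := Module.Basis.ofVectorSpace k W
  let coords : R ⊗[k] W ≃ₗ[k] (Module.Basis.ofVectorSpaceIndex k W →₀ R) :=
    (LinearEquiv.lTensor R b.repr).trans (TensorProduct.finsuppScalarRight k k R _)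
  have hcoords (ξ : Rv) (j) (t : R ⊗[k] W) :
      B ξ (coords t j) = b.repr (pairingContract k R Rv W B ξ t) j := by
    induction t using TensorProduct.induction_on with
    | zero => simp
    | tmul x w => simp [coords, mul_comm]
    | add t₁ t₂ ih₁ ih₂ => simp [ih₁, ih₂]
  rw [← LinearMap.ker_eq_bot, LinearMap.ker_eq_bot']
  intro t ht
  have hzero : coords t = 0 := Finsupp.ext fun j => hB _ fun ξ => by
    rw [hcoords, ← LinearMap.flip_apply, ht]
    simp
  simpa using congrArg coords.symm hzero

lemma mem_range_pairingContract_flip (B : Rv →ₗ[k] R →ₗ[k] k) (E : Submodule k R)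
    [FiniteDimensional k E] (h : Rv →ₗ[k] W) (hh : ∀ ξ : Rv, (∀ x ∈ E, B ξ x = 0) → h ξ = 0) :
    h ∈ LinearMap.range (pairingContract k R Rv W B).flip := by
  let restrict : Rv →ₗ[k] Module.Dual k E := (B.flip ∘ₗ E.subtype).flip
  obtain ⟨h', hh'⟩ := LinearMap.exists_comp_eq_of_ker_le restrict h fun ξ hξ =>
    hh ξ fun x hx => LinearMap.congr_fun (LinearMap.mem_ker.mp hξ) ⟨x, hx⟩
  let e := Module.finBasis k E
  refine ⟨∑ i, (e i : R) ⊗ₜ[k] h' (e.coord i), LinearMap.ext fun ξ => ?_⟩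
  calc pairingContract k R Rv W B ξ (∑ i, (e i : R) ⊗ₜ[k] h' (e.coord i))
      = h' (∑ i, restrict ξ (e i) • e.coord i) := by simp [restrict]
    _ = h ξ := by rw [e.sum_dual_apply_smul_coord, ← hh', LinearMap.comp_apply]

lemma Dmap_injective {B : Rv →ₗ[k] R →ₗ[k] k} (hB : ∀ x : R, (∀ ξ : Rv, B ξ x = 0) → x = 0) :
    Function.Injective (Dmap k R Rv V W B) := by
  intro f₁ f₂ hf
  ext1 v
  refine pairingContract_flip_injective hB (LinearMap.ext fun ξ => ?_)
  simpa using LinearMap.congr_fun hf (ξ ⊗ₜ[k] v)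

lemma exists_Dmap_eq_of_isRatLeft {B : Rv →ₗ[k] R →ₗ[k] k}
    (hB : ∀ x : R, (∀ ξ : Rv, B ξ x = 0) → x = 0) {g : Rv ⊗[k] V →ₗ[k] W}
    (hg : IsRatLeft k R Rv V W B g) : ∃ f : V →ₗ[k] R ⊗[k] W, Dmap k R Rv V W B f = g := by
  let Φ := (pairingContract k R Rv W B).flip
  let G : V →ₗ[k] Rv →ₗ[k] W := (TensorProduct.curry g).flip
  have hG (v : V) : G v ∈ LinearMap.range Φ := by
    obtain ⟨E, _, hE⟩ := hg v
    exact mem_range_pairingContract_flip B E (G v) hE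
  obtain ⟨ψ, hψ⟩ := Φ.exists_leftInverse_of_injective
    (LinearMap.ker_eq_bot.mpr (pairingContract_flip_injective hB))
  refine ⟨ψ ∘ₗ G, TensorProduct.ext' fun ξ v => ?_⟩
  obtain ⟨t, ht⟩ := hG v
  have hΦψ : Φ (ψ (G v)) = G v := by rw [← ht, ← LinearMap.comp_apply ψ, hψ, LinearMap.id_apply]
  simpa [Φ, G] using LinearMap.congr_fun hΦψ ξ

variable (k R Rv V W)

theorem dual_pair_rational_hom_left
    (B : Rv →ₗ[k] R →ₗ[k] k)
    (hnd₂ : ∀ x : R, (∀ ξ : Rv, B ξ x = 0) → x = 0) :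
    (∀ f : V →ₗ[k] R ⊗[k] W, IsRatLeft k R Rv V W B (Dmap k R Rv V W B f)) ∧
    Function.Injective (Dmap k R Rv V W B) ∧
    (∀ g : Rv ⊗[k] V →ₗ[k] W, IsRatLeft k R Rv V W B g →
      ∃ f : V →ₗ[k] R ⊗[k] W, Dmap k R Rv V W B f = g) :=
  ⟨isRatLeft_Dmap B, Dmap_injective hnd₂, fun _ => exists_Dmap_eq_of_isRatLeft hnd₂⟩

end
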